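/- arXiv:2605.00469 — 3 statements merged into one kernel-verified Lean document; each statement's English description precedes it below -/
import Mathlib

section
/- Let A=(a_ij) be a doubly-laced symmetrizable GCM such that X_sh={p} consists of a single index. Then ⟨w_1·α_p∨, w_2·α_p⟩ is even for all w_1,w_2∈W. In particular there do not exist two real roots β_1,β_2∈W·α_p with ⟨β_1∨,β_2⟩=⟨β_2∨,β_1⟩=−1, so there is no π-system of type A_2 in A contained wholly in the shortest real roots. The same conclusions hold when X_long={q} is a single index, with W·α_q (the longest real roots) in place of W·α_p. -/
/-- An integer matrix is a generalized Cartan matrix. -/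
def IsGCM {n : ℕ} (A : Matrix (Fin n) (Fin n) ℤ) : Prop :=
  (∀ i, A i i = 2) ∧ (∀ i j, i ≠ j → A i j ≤ 0) ∧ (∀ i j, A i j = 0 → A j i = 0)

/-- `d` is a symmetrizer of `A`: positive rationals with `dᵢ aᵢⱼ = dⱼ aⱼᵢ`. -/
def IsSymmetrizer {n : ℕ} (A : Matrix (Fin n) (Fin n) ℤ) (d : Fin n → ℚ) : Prop :=
  (∀ i, 0 < d i) ∧ ∀ i j, d i * A i j = d j * A j i

/-- The pairing `⟨γ∨, β⟩` between the coroot lattice and the root lattice: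
in coordinates (γ in the coroot basis, β in the root basis) it is `∑ γᵢ aᵢⱼ βⱼ`,
so that `⟨αᵢ∨, αⱼ⟩ = aᵢⱼ`. -/
def pairing {n : ℕ} (A : Matrix (Fin n) (Fin n) ℤ) (y x : Fin n → ℤ) : ℤ :=
  ∑ i, ∑ j, y i * A i j * x j

/-- Simple reflection `s_k` acting on the root lattice: `s_k x = x − ⟨α_k∨, x⟩ α_k`. -/
def sRoot {n : ℕ} (A : Matrix (Fin n) (Fin n) ℤ) (k : Fin n) (x : Fin n → ℤ) : Fin n → ℤ :=
  fun i => x i - (if i = k then ∑ j, A k j * x j else 0)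

/-- Simple reflection `s_k` acting on the coroot lattice: `s_k(αⱼ∨) = αⱼ∨ − aⱼₖ α_k∨`. -/
def sCoroot {n : ℕ} (A : Matrix (Fin n) (Fin n) ℤ) (k : Fin n) (y : Fin n → ℤ) : Fin n → ℤ :=
  fun i => y i - (if i = k then ∑ j, y j * A j k else 0)

/-- Action on the root lattice of a Weyl group element given as a word in simple reflections. -/
def actRoot {n : ℕ} (A : Matrix (Fin n) (Fin n) ℤ) (w : List (Fin n)) (x : Fin n → ℤ) :
    Fin n → ℤ :=
  w.foldr (sRoot A) x

/-- Action on the coroot lattice of a Weyl group element given as a word in simple reflections. -/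
def actCoroot {n : ℕ} (A : Matrix (Fin n) (Fin n) ℤ) (w : List (Fin n)) (y : Fin n → ℤ) :
    Fin n → ℤ :=
  w.foldr (sCoroot A) y

/-!
The pairing is `W`-invariant, so `⟨w₁·α_p∨, w₂·α_p⟩ = ⟨α_p∨, w₁⁻¹w₂·α_p⟩` is an integer
combination of the entries `a_pj` of row `p`. In a doubly laced matrix an odd off-diagonal entry
`a_pj` must be `-1`, and then `d_p = -a_jp d_j ≥ d_j` makes `j` a second shortest index. Hence
row `p` is even when `X_sh = {p}`. Dually, when `X_long = {q}` an odd `a_iq` would make `i` a second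
longest index, so column `q` is even and `⟨w₁·α_q∨, w₂·α_q⟩ = ⟨w₂⁻¹w₁·α_q∨, α_q⟩` is even.
-/

open Matrix

section Pairing

variable {n : ℕ} (A : Matrix (Fin n) (Fin n) ℤ)

theorem pairing_eq_dotProduct_mulVec (y x : Fin n → ℤ) : pairing A y x = y ⬝ᵥ (A *ᵥ x) := by
  simp only [pairing, dotProduct, mulVec, Finset.mul_sum, mul_assoc]

theorem sRoot_eq (k : Fin n) (x : Fin n → ℤ) : sRoot A k x = x - (A *ᵥ x) k • Pi.single k 1 := by
  ext i
  by_cases hik : i = k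
  · subst hik; simp [sRoot, mulVec, dotProduct]
  · simp [sRoot, hik]

theorem sCoroot_eq (k : Fin n) (y : Fin n → ℤ) :
    sCoroot A k y = y - (y ᵥ* A) k • Pi.single k 1 := by
  ext i
  by_cases hik : i = k
  · subst hik; simp [sCoroot, vecMul, dotProduct]
  · simp [sCoroot, hik]

/-- Both sides equal `⟨y, x⟩ - ⟨y, α_k⟩ ⟨α_k∨, x⟩`. -/
theorem pairing_sCoroot (k : Fin n) (y x : Fin n → ℤ) :
    pairing A (sCoroot A k y) x = pairing A y (sRoot A k x) := by
  simp only [pairing_eq_dotProduct_mulVec, sCoroot_eq, sRoot_eq, sub_dotProduct, mulVec_sub,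
    dotProduct_sub, smul_dotProduct, mulVec_smul, dotProduct_smul, single_dotProduct,
    mulVec_single_one, dotProduct_mulVec y A, smul_eq_mul, one_mul, ← vecMul_apply]
  ring

theorem pairing_actCoroot (w : List (Fin n)) (y x : Fin n → ℤ) :
    pairing A (actCoroot A w y) x = pairing A y (actRoot A w.reverse x) := by
  induction w generalizing x with
  | nil => rfl
  | cons k w ih =>
    simp only [actCoroot, actRoot, List.foldr_cons, List.reverse_cons, List.foldr_append] at ih ⊢
    rw [pairing_sCoroot, ih]
    rfl

theorem pairing_actRoot (w : List (Fin n)) (y x : Fin n → ℤ) :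
    pairing A y (actRoot A w x) = pairing A (actCoroot A w.reverse y) x := by
  rw [pairing_actCoroot, List.reverse_reverse]

theorem dvd_pairing_single_left {m : ℤ} {p : Fin n} (hrow : ∀ j, m ∣ A p j) (x : Fin n → ℤ) :
    m ∣ pairing A (Pi.single p 1) x := by
  rw [pairing_eq_dotProduct_mulVec, single_dotProduct, one_mul, mulVec, dotProduct]
  exact Finset.dvd_sum fun j _ => (hrow j).mul_right _

theorem dvd_pairing_single_right {m : ℤ} {q : Fin n} (hcol : ∀ i, m ∣ A i q) (y : Fin n → ℤ) :
    m ∣ pairing A y (Pi.single q 1) := by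
  rw [pairing_eq_dotProduct_mulVec, mulVec_single_one]
  exact Finset.dvd_sum fun i _ => (hcol i).mul_left _

end Pairing

namespace IsGCM

variable {n : ℕ} {A : Matrix (Fin n) (Fin n) ℤ} {d : Fin n → ℚ}

theorem ne_of_odd (hA : IsGCM A) {i j : Fin n} (hodd : Odd (A i j)) : i ≠ j := by
  rintro rfl
  rw [hA.1 i] at hodd
  exact absurd hodd (by decide)

/-- An odd off-diagonal entry of an (at most) doubly laced GCM is `aᵢⱼ = -1`, and then
`dᵢ = -aⱼᵢ dⱼ`. -/
theorem le_of_odd (hA : IsGCM A) (hd : IsSymmetrizer A d)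
    (hlaced : ∀ i j, i ≠ j → A i j * A j i ≤ 2) {i j : Fin n} (hodd : Odd (A i j)) :
    d j ≤ d i := by
  have hij := hA.ne_of_odd hodd
  obtain ⟨m, hm⟩ := hodd
  have hji_le : A j i ≤ -1 := by
    have : A j i ≠ 0 := fun h => by have := hA.2.2 j i h; omega
    have := hA.2.1 j i hij.symm
    omega
  have hij_eq : A i j = -1 := by
    have : -3 < A i j := by nlinarith [hlaced i j hij]
    have := hA.2.1 i j hij
    omega
  have hsym := hd.2 i j
  have hji_le' : (A j i : ℚ) ≤ -1 := by exact_mod_cast hji_le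
  rw [hij_eq] at hsym
  push_cast at hsym
  nlinarith [hd.1 j]

theorem two_dvd_row_of_unique_argmin (hA : IsGCM A) (hd : IsSymmetrizer A d)
    (hlaced : ∀ i j, i ≠ j → A i j * A j i ≤ 2) {p : Fin n}
    (hp : ∀ i, (∀ k, d i ≤ d k) ↔ i = p) (j : Fin n) : 2 ∣ A p j := by
  by_contra hodd
  rw [← even_iff_two_dvd, Int.not_even_iff_odd] at hodd
  have hjp : j = p := (hp j).1 fun k => (hA.le_of_odd hd hlaced hodd).trans ((hp p).2 rfl k)
  exact hA.ne_of_odd hodd hjp.symm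

theorem two_dvd_col_of_unique_argmax (hA : IsGCM A) (hd : IsSymmetrizer A d)
    (hlaced : ∀ i j, i ≠ j → A i j * A j i ≤ 2) {q : Fin n}
    (hq : ∀ i, (∀ k, d k ≤ d i) ↔ i = q) (i : Fin n) : 2 ∣ A i q := by
  by_contra hodd
  rw [← even_iff_two_dvd, Int.not_even_iff_odd] at hodd
  have hiq : i = q := (hq i).1 fun k => ((hq q).2 rfl k).trans (hA.le_of_odd hd hlaced hodd)
  exact hA.ne_of_odd hodd hiq

end IsGCM

theorem no_A2_in_short_singleton_general {n : ℕ} (A : Matrix (Fin n) (Fin n) ℤ) (hA : IsGCM A)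
    (d : Fin n → ℚ) (hd : IsSymmetrizer A d)
    (hlaced : ∀ i j, i ≠ j → A i j * A j i = 0 ∨ A i j * A j i = 1 ∨ A i j * A j i = 2) :
    (∀ p : Fin n, (∀ i, (∀ k, d i ≤ d k) ↔ i = p) →
      (∀ w₁ w₂ : List (Fin n),
        2 ∣ pairing A (actCoroot A w₁ (Pi.single p 1)) (actRoot A w₂ (Pi.single p 1))) ∧
      ¬ ∃ w₁ w₂ : List (Fin n),
        pairing A (actCoroot A w₁ (Pi.single p 1)) (actRoot A w₂ (Pi.single p 1)) = -1 ∧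
        pairing A (actCoroot A w₂ (Pi.single p 1)) (actRoot A w₁ (Pi.single p 1)) = -1)
    ∧
    (∀ q : Fin n, (∀ i, (∀ k, d k ≤ d i) ↔ i = q) →
      (∀ w₁ w₂ : List (Fin n),
        2 ∣ pairing A (actCoroot A w₁ (Pi.single q 1)) (actRoot A w₂ (Pi.single q 1))) ∧
      ¬ ∃ w₁ w₂ : List (Fin n),
        pairing A (actCoroot A w₁ (Pi.single q 1)) (actRoot A w₂ (Pi.single q 1)) = -1 ∧
        pairing A (actCoroot A w₂ (Pi.single q 1)) (actRoot A w₁ (Pi.single q 1)) = -1) := by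
  have hlaced' : ∀ i j, i ≠ j → A i j * A j i ≤ 2 := fun i j hij => by
    rcases hlaced i j hij with h | h | h <;> omega
  have no_neg_one (P : List (Fin n) → List (Fin n) → ℤ) (hP : ∀ w₁ w₂, 2 ∣ P w₁ w₂) :
      ¬ ∃ w₁ w₂, P w₁ w₂ = -1 ∧ P w₂ w₁ = -1 := by
    rintro ⟨w₁, w₂, h, -⟩
    have := hP w₁ w₂
    omega
  refine ⟨fun p hp => ?_, fun q hq => ?_⟩
  · have heven (w₁ w₂ : List (Fin n)) :
        2 ∣ pairing A (actCoroot A w₁ (Pi.single p 1)) (actRoot A w₂ (Pi.single p 1)) := by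
      rw [pairing_actCoroot]
      exact dvd_pairing_single_left A (hA.two_dvd_row_of_unique_argmin hd hlaced' hp) _
    exact ⟨heven, no_neg_one _ heven⟩
  · have heven (w₁ w₂ : List (Fin n)) :
        2 ∣ pairing A (actCoroot A w₁ (Pi.single q 1)) (actRoot A w₂ (Pi.single q 1)) := by
      rw [pairing_actRoot]
      exact dvd_pairing_single_right A (hA.two_dvd_col_of_unique_argmax hd hlaced' hq) _
    exact ⟨heven, no_neg_one _ heven⟩

/-- Let `A` be a doubly-laced symmetrizable GCM. If `X_sh = {p}` is a
single index, then `⟨w₁·α_p∨, w₂·α_p⟩` is even for all Weyl group elements `w₁, w₂`;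
in particular no two real roots in `W·α_p` pair to `(−1, −1)`, so there is no π-system of
type `A₂` contained wholly in the shortest real roots. The same holds with
`X_long = {q}` and `W·α_q` (the longest real roots). -/
theorem no_A2_in_short_singleton {n : ℕ} (A : Matrix (Fin n) (Fin n) ℤ) (hA : IsGCM A)
    (d : Fin n → ℚ) (hd : IsSymmetrizer A d)
    (hlaced : ∀ i j, i ≠ j → A i j * A j i = 0 ∨ A i j * A j i = 1 ∨ A i j * A j i = 2)
    (hattained : ∃ i j, i ≠ j ∧ A i j * A j i = 2) :
    (∀ p : Fin n, (∀ i, (∀ k, d i ≤ d k) ↔ i = p) →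
      (∀ w₁ w₂ : List (Fin n),
        2 ∣ pairing A (actCoroot A w₁ (Pi.single p 1)) (actRoot A w₂ (Pi.single p 1))) ∧
      ¬ ∃ w₁ w₂ : List (Fin n),
        pairing A (actCoroot A w₁ (Pi.single p 1)) (actRoot A w₂ (Pi.single p 1)) = -1 ∧
        pairing A (actCoroot A w₂ (Pi.single p 1)) (actRoot A w₁ (Pi.single p 1)) = -1)
    ∧
    (∀ q : Fin n, (∀ i, (∀ k, d k ≤ d i) ↔ i = q) →
      (∀ w₁ w₂ : List (Fin n),
        2 ∣ pairing A (actCoroot A w₁ (Pi.single q 1)) (actRoot A w₂ (Pi.single q 1))) ∧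
      ¬ ∃ w₁ w₂ : List (Fin n),
        pairing A (actCoroot A w₁ (Pi.single q 1)) (actRoot A w₂ (Pi.single q 1)) = -1 ∧
        pairing A (actCoroot A w₂ (Pi.single q 1)) (actRoot A w₁ (Pi.single q 1)) = -1) :=
  no_A2_in_short_singleton_general A hA d hd hlaced
end

section
/- Let A=(a_ij) be a triply-laced symmetrizable GCM such that X_sh={p} consists of a single index. Then for all w_1,w_2∈W, ⟨w_1·α_p∨, w_2·α_p⟩ ≡ 2 or −2 (mod 3); in particular it is never divisible by 3, so there do not exist two real roots β_1,β_2∈W·α_p with ⟨β_1∨,β_2⟩=0, and hence there is no π-system of type A_1×A_1 in A contained wholly in the shortest real roots. The same conclusions hold when X_long={q} is a single index, with the longest real roots W·α_q in place of W·α_p. -/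
/-! Since `p` is the unique index with minimal `dₚ`, the relation `dₚ aₚⱼ = dⱼ aⱼₚ` forces
`|aₚⱼ| > |aⱼₚ|` whenever `aₚⱼ ≠ 0`, so triple lacing leaves only `aₚⱼ ∈ {0, -3}`: the `p`-th row
of `A` is `2eₚ` modulo `3`. Modulo `3` every simple reflection then fixes `α_p∨` and the
`α_p`-coordinate of a root up to sign (only `s_p` acts, by `-1`), so `w·α_p∨ ≡ ±α_p∨` and
`(w·α_p)_p ≡ ±1`, whence `⟨w₁·α_p∨, w₂·α_p⟩ ≡ ±2`. For the unique longest index `q` the same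
argument applies to the column `q`, i.e. to `Aᵀ`, whose roots and coroots are those of `A`
swapped. -/

open scoped Matrix

theorem apply_lt_apply_of_unique_min {ι α : Type*} [PartialOrder α] {f : ι → α} {p : ι}
    (hp : ∀ i, (∀ k, f i ≤ f k) ↔ i = p) {j : ι} (hj : j ≠ p) : f p < f j :=
  lt_of_le_of_ne ((hp p).2 rfl j) fun h => hj ((hp j).1 fun k => h ▸ (hp p).2 rfl k)

theorem IsGCM.three_dvd_of_lt {n : ℕ} {A : Matrix (Fin n) (Fin n) ℤ} (hA : IsGCM A)
    {d : Fin n → ℚ} (hd : IsSymmetrizer A d)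
    (hlaced : ∀ i j, i ≠ j → A i j * A j i = 0 ∨ A i j * A j i = 1 ∨ A i j * A j i = 3)
    {i j : Fin n} (hij : i ≠ j) (hlt : d i < d j) : 3 ∣ A i j := by
  by_cases hji : A j i = 0
  · rw [hA.2.2 j i hji]; exact dvd_zero 3
  have hji_neg : A j i < 0 := lt_of_le_of_ne (hA.2.1 j i hij.symm) hji
  have hij_lt : A i j < A j i := by
    have hsym := hd.2 i j
    have hdi := hd.1 i
    have hji_le : (A j i : ℚ) ≤ -1 := by exact_mod_cast Int.le_sub_one_of_lt hji_neg
    exact_mod_cast (show (A i j : ℚ) < A j i by nlinarith)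
  rcases hlaced i j hij with h0 | h1 | h3
  · exact absurd h0 (mul_ne_zero (by omega) hji)
  · nlinarith
  · have hji_eq : A j i = -1 := by nlinarith
    rw [hji_eq] at h3
    exact ⟨-1, by linarith⟩

theorem Matrix.map_intCast_row_eq_single {ι : Type*} [DecidableEq ι] {ℓ : ℕ}
    {A : Matrix ι ι ℤ} {p : ι} (hpp : A p p = 2) (hdvd : ∀ j, j ≠ p → (ℓ : ℤ) ∣ A p j) :
    A.map (Int.cast : ℤ → ZMod ℓ) p = Pi.single p 2 := by
  funext j
  by_cases hj : j = p
  · subst hj; simp [hpp]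
  · simpa [Pi.single_eq_of_ne hj] using (ZMod.intCast_zmod_eq_zero_iff_dvd _ ℓ).2 (hdvd j hj)

def orbitPairing {n : ℕ} (A : Matrix (Fin n) (Fin n) ℤ) (p : Fin n) (w₁ w₂ : List (Fin n)) : ℤ :=
  pairing A (actCoroot A w₁ (Pi.single p 1)) (actRoot A w₂ (Pi.single p 1))

section ReductionModulo

variable {n ℓ : ℕ} (A : Matrix (Fin n) (Fin n) ℤ) {p : Fin n}

theorem sum_row_mul_eq_of_map_row (hrow : A.map (Int.cast : ℤ → ZMod ℓ) p = Pi.single p 2)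
    (v : Fin n → ZMod ℓ) : ∑ j, (A p j : ZMod ℓ) * v j = 2 * v p := by
  simp only [← Matrix.map_apply (f := (Int.cast : ℤ → ZMod ℓ)), hrow]
  exact single_dotProduct v 2 p

theorem intCast_sRoot_apply_self (hrow : A.map (Int.cast : ℤ → ZMod ℓ) p = Pi.single p 2)
    (k : Fin n) (x : Fin n → ℤ) :
    (sRoot A k x p : ZMod ℓ) = if k = p then -(x p : ZMod ℓ) else x p := by
  by_cases hk : k = p
  · subst hk
    simp only [sRoot, if_true, Int.cast_sub, Int.cast_sum, Int.cast_mul]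
    rw [sum_row_mul_eq_of_map_row A hrow]
    ring
  · simp [sRoot, Ne.symm hk, hk]

theorem intCast_sCoroot_eq_single (hrow : A.map (Int.cast : ℤ → ZMod ℓ) p = Pi.single p 2)
    (k : Fin n) {y : Fin n → ℤ} {c : ZMod ℓ} (hy : (fun i => (y i : ZMod ℓ)) = Pi.single p c) :
    (fun i => (sCoroot A k y i : ZMod ℓ)) = Pi.single p (if k = p then -c else c) := by
  have hy' : ∀ j, (y j : ZMod ℓ) = (Pi.single p c : Fin n → ZMod ℓ) j := fun j => congrFun hy j
  have hsum : ((∑ j, y j * A j k : ℤ) : ZMod ℓ) = c * (A p k : ZMod ℓ) := by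
    push_cast
    simp only [hy']
    exact single_dotProduct (fun j => (A j k : ZMod ℓ)) c p
  have hApk : (A p k : ZMod ℓ) = (Pi.single p 2 : Fin n → ZMod ℓ) k := congrFun hrow k
  funext i
  by_cases hkp : k = p
  · subst hkp
    by_cases hik : i = k
    · subst hik
      simp only [sCoroot, if_true, Int.cast_sub, hsum, hApk, hy', Pi.single_eq_same]
      ring
    · simp [sCoroot, hik, hy']
  · have hApk0 : (A p k : ZMod ℓ) = 0 := by rw [hApk, Pi.single_eq_of_ne hkp]
    simp [sCoroot, hkp, hsum, hApk0, hy']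

theorem intCast_pairing_of_eq_single (hrow : A.map (Int.cast : ℤ → ZMod ℓ) p = Pi.single p 2)
    {y x : Fin n → ℤ} {c : ZMod ℓ} (hy : (fun i => (y i : ZMod ℓ)) = Pi.single p c) :
    (pairing A y x : ZMod ℓ) = c * 2 * x p := by
  have hy' : ∀ i, (y i : ZMod ℓ) = (Pi.single p c : Fin n → ZMod ℓ) i := fun i => congrFun hy i
  simp only [pairing, Int.cast_sum, Int.cast_mul, hy', mul_assoc, ← Finset.mul_sum]
  calc _ = c * ∑ j, (A p j : ZMod ℓ) * x j :=
        single_dotProduct (fun i => ∑ j, (A i j : ZMod ℓ) * x j) c p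
    _ = c * (2 * x p) := by rw [sum_row_mul_eq_of_map_row A hrow]

theorem intCast_actRoot_single_apply_self
    (hrow : A.map (Int.cast : ℤ → ZMod ℓ) p = Pi.single p 2) (w : List (Fin n)) :
    (actRoot A w (Pi.single p 1) p : ZMod ℓ) = (-1) ^ w.count p := by
  induction w with
  | nil => simp [actRoot]
  | cons k w ih =>
    change (sRoot A k (actRoot A w (Pi.single p 1)) p : ZMod ℓ) = _
    rw [intCast_sRoot_apply_self A hrow, ih, List.count_cons]
    by_cases hk : k = p <;> simp [hk, pow_succ]

theorem intCast_actCoroot_single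
    (hrow : A.map (Int.cast : ℤ → ZMod ℓ) p = Pi.single p 2) (w : List (Fin n)) :
    (fun i => (actCoroot A w (Pi.single p 1) i : ZMod ℓ)) = Pi.single p ((-1) ^ w.count p) := by
  induction w with
  | nil => funext i; by_cases hi : i = p <;> simp [actCoroot, hi]
  | cons k w ih =>
    change (fun i => (sCoroot A k (actCoroot A w (Pi.single p 1)) i : ZMod ℓ)) = _
    rw [intCast_sCoroot_eq_single A hrow k ih, List.count_cons]
    by_cases hk : k = p <;> simp [hk, pow_succ]

theorem orbitPairing_modEq (hrow : A.map (Int.cast : ℤ → ZMod ℓ) p = Pi.single p 2)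
    (w₁ w₂ : List (Fin n)) :
    orbitPairing A p w₁ w₂ ≡ 2 * (-1) ^ (w₁.count p + w₂.count p) [ZMOD ℓ] := by
  rw [← ZMod.intCast_eq_intCast_iff, orbitPairing,
    intCast_pairing_of_eq_single A hrow (intCast_actCoroot_single A hrow w₁),
    intCast_actRoot_single_apply_self A hrow]
  push_cast
  ring

theorem orbitPairing_modEq_two_or_neg_two
    (hrow : A.map (Int.cast : ℤ → ZMod ℓ) p = Pi.single p 2) (w₁ w₂ : List (Fin n)) :
    orbitPairing A p w₁ w₂ ≡ 2 [ZMOD ℓ] ∨ orbitPairing A p w₁ w₂ ≡ -2 [ZMOD ℓ] := by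
  have h := orbitPairing_modEq A hrow w₁ w₂
  rcases neg_one_pow_eq_or ℤ (w₁.count p + w₂.count p) with hs | hs <;> rw [hs] at h
  · exact Or.inl (by simpa using h)
  · exact Or.inr (by simpa using h)

end ReductionModulo

section Transpose

variable {n : ℕ} (A : Matrix (Fin n) (Fin n) ℤ)

theorem sRoot_transpose : sRoot Aᵀ = sCoroot A := by
  funext k x i
  simp only [sRoot, sCoroot, Matrix.transpose_apply, mul_comm (A _ k)]

theorem sCoroot_transpose : sCoroot Aᵀ = sRoot A := by
  simpa using (sRoot_transpose Aᵀ).symm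

theorem actRoot_transpose : actRoot Aᵀ = actCoroot A := by
  funext w x
  rw [actRoot, actCoroot, sRoot_transpose]

theorem actCoroot_transpose : actCoroot Aᵀ = actRoot A := by
  funext w x
  rw [actRoot, actCoroot, sCoroot_transpose]

theorem pairing_transpose (y x : Fin n → ℤ) : pairing Aᵀ y x = pairing A x y := by
  simp only [pairing, Matrix.transpose_apply]
  rw [Finset.sum_comm]
  exact Finset.sum_congr rfl fun j _ => Finset.sum_congr rfl fun i _ => by ring

theorem orbitPairing_transpose (p : Fin n) (w₁ w₂ : List (Fin n)) :
    orbitPairing Aᵀ p w₁ w₂ = orbitPairing A p w₂ w₁ := by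
  rw [orbitPairing, orbitPairing, pairing_transpose, actRoot_transpose, actCoroot_transpose]

end Transpose

theorem orbitPairing_not_three_dvd {n : ℕ} {A : Matrix (Fin n) (Fin n) ℤ} {p : Fin n}
    (h : ∀ w₁ w₂, orbitPairing A p w₁ w₂ ≡ 2 [ZMOD 3] ∨ orbitPairing A p w₁ w₂ ≡ -2 [ZMOD 3]) :
    (∀ w₁ w₂, ¬ 3 ∣ orbitPairing A p w₁ w₂) ∧ ¬ ∃ w₁ w₂, orbitPairing A p w₁ w₂ = 0 := by
  have hndvd : ∀ w₁ w₂, ¬ 3 ∣ orbitPairing A p w₁ w₂ := fun w₁ w₂ => by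
    have := h w₁ w₂
    unfold Int.ModEq at this
    omega
  exact ⟨hndvd, fun ⟨w₁, w₂, h0⟩ => hndvd w₁ w₂ (h0 ▸ dvd_zero 3)⟩

theorem no_A1xA1_in_short_triply_general {n : ℕ} (A : Matrix (Fin n) (Fin n) ℤ) (hA : IsGCM A)
    (d : Fin n → ℚ) (hd : IsSymmetrizer A d)
    (hlaced : ∀ i j, i ≠ j → A i j * A j i = 0 ∨ A i j * A j i = 1 ∨ A i j * A j i = 3) :
    (∀ p : Fin n, (∀ i, (∀ k, d i ≤ d k) ↔ i = p) →
      (∀ w₁ w₂ : List (Fin n),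
        Int.ModEq 3 (pairing A (actCoroot A w₁ (Pi.single p 1))
            (actRoot A w₂ (Pi.single p 1))) 2 ∨
        Int.ModEq 3 (pairing A (actCoroot A w₁ (Pi.single p 1))
            (actRoot A w₂ (Pi.single p 1))) (-2)) ∧
      (∀ w₁ w₂ : List (Fin n),
        ¬ (3 ∣ pairing A (actCoroot A w₁ (Pi.single p 1)) (actRoot A w₂ (Pi.single p 1)))) ∧
      ¬ ∃ w₁ w₂ : List (Fin n),
        pairing A (actCoroot A w₁ (Pi.single p 1)) (actRoot A w₂ (Pi.single p 1)) = 0)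
    ∧
    (∀ q : Fin n, (∀ i, (∀ k, d k ≤ d i) ↔ i = q) →
      (∀ w₁ w₂ : List (Fin n),
        Int.ModEq 3 (pairing A (actCoroot A w₁ (Pi.single q 1))
            (actRoot A w₂ (Pi.single q 1))) 2 ∨
        Int.ModEq 3 (pairing A (actCoroot A w₁ (Pi.single q 1))
            (actRoot A w₂ (Pi.single q 1))) (-2)) ∧
      (∀ w₁ w₂ : List (Fin n),
        ¬ (3 ∣ pairing A (actCoroot A w₁ (Pi.single q 1)) (actRoot A w₂ (Pi.single q 1)))) ∧
      ¬ ∃ w₁ w₂ : List (Fin n),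
        pairing A (actCoroot A w₁ (Pi.single q 1)) (actRoot A w₂ (Pi.single q 1)) = 0) := by
  refine ⟨fun p hp => ?_, fun q hq => ?_⟩
  · have hrow : A.map (Int.cast : ℤ → ZMod 3) p = Pi.single p 2 :=
      Matrix.map_intCast_row_eq_single (hA.1 p) fun j hj =>
        hA.three_dvd_of_lt hd hlaced hj.symm (apply_lt_apply_of_unique_min hp hj)
    have H := orbitPairing_modEq_two_or_neg_two A hrow
    exact ⟨H, orbitPairing_not_three_dvd H⟩
  · have hrow : Aᵀ.map (Int.cast : ℤ → ZMod 3) q = Pi.single q 2 :=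
      Matrix.map_intCast_row_eq_single (hA.1 q) fun j hj =>
        hA.three_dvd_of_lt hd hlaced hj
          (apply_lt_apply_of_unique_min (f := fun i => OrderDual.toDual (d i)) hq hj)
    have H : ∀ w₁ w₂,
        orbitPairing A q w₁ w₂ ≡ 2 [ZMOD 3] ∨ orbitPairing A q w₁ w₂ ≡ -2 [ZMOD 3] := fun w₁ w₂ =>
      orbitPairing_transpose A q w₂ w₁ ▸ orbitPairing_modEq_two_or_neg_two Aᵀ hrow w₂ w₁
    exact ⟨H, orbitPairing_not_three_dvd H⟩

/-- Let `A` be a triply-laced symmetrizable GCM. If `X_sh = {p}` is a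
single index, then `⟨w₁·α_p∨, w₂·α_p⟩ ≡ ±2 (mod 3)` for all `w₁, w₂ ∈ W`; in particular
it is never divisible by 3, so no two real roots in `W·α_p` pair to `0`, and there is no
π-system of type `A₁ × A₁` wholly in the shortest real roots. The same holds with
`X_long = {q}` and the longest real roots `W·α_q`. -/
theorem no_A1xA1_in_short_triply {n : ℕ} (A : Matrix (Fin n) (Fin n) ℤ) (hA : IsGCM A)
    (d : Fin n → ℚ) (hd : IsSymmetrizer A d)
    (hlaced : ∀ i j, i ≠ j → A i j * A j i = 0 ∨ A i j * A j i = 1 ∨ A i j * A j i = 3)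
    (hattained : ∃ i j, i ≠ j ∧ A i j * A j i = 3) :
    (∀ p : Fin n, (∀ i, (∀ k, d i ≤ d k) ↔ i = p) →
      (∀ w₁ w₂ : List (Fin n),
        Int.ModEq 3 (pairing A (actCoroot A w₁ (Pi.single p 1))
            (actRoot A w₂ (Pi.single p 1))) 2 ∨
        Int.ModEq 3 (pairing A (actCoroot A w₁ (Pi.single p 1))
            (actRoot A w₂ (Pi.single p 1))) (-2)) ∧
      (∀ w₁ w₂ : List (Fin n),
        ¬ (3 ∣ pairing A (actCoroot A w₁ (Pi.single p 1)) (actRoot A w₂ (Pi.single p 1)))) ∧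
      ¬ ∃ w₁ w₂ : List (Fin n),
        pairing A (actCoroot A w₁ (Pi.single p 1)) (actRoot A w₂ (Pi.single p 1)) = 0)
    ∧
    (∀ q : Fin n, (∀ i, (∀ k, d k ≤ d i) ↔ i = q) →
      (∀ w₁ w₂ : List (Fin n),
        Int.ModEq 3 (pairing A (actCoroot A w₁ (Pi.single q 1))
            (actRoot A w₂ (Pi.single q 1))) 2 ∨
        Int.ModEq 3 (pairing A (actCoroot A w₁ (Pi.single q 1))
            (actRoot A w₂ (Pi.single q 1))) (-2)) ∧
      (∀ w₁ w₂ : List (Fin n),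
        ¬ (3 ∣ pairing A (actCoroot A w₁ (Pi.single q 1)) (actRoot A w₂ (Pi.single q 1)))) ∧
      ¬ ∃ w₁ w₂ : List (Fin n),
        pairing A (actCoroot A w₁ (Pi.single q 1)) (actRoot A w₂ (Pi.single q 1)) = 0) :=
  no_A1xA1_in_short_triply_general A hA d hd hlaced
end

section
/- Let A=(a_ij) be an indecomposable, triply-laced symmetrizable GCM satisfying condition (★), with X_sh={p} a single index. If β_1,β_2∈W·α_p are real roots with ⟨β_1∨,β_2⟩=⟨β_2∨,β_1⟩=−1 (a pair of type A_2), then β_2−β_1 is a real root of A. Consequently there is no π-system of type A_2 in A contained wholly in the shortest real roots. -/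
/-- The invariant symmetric bilinear form on `Q ⊗ ℚ` determined by a symmetrizer `d`:
`(αᵢ, αⱼ) = dᵢ aᵢⱼ`. -/
def formQ {n : ℕ} (A : Matrix (Fin n) (Fin n) ℤ) (d : Fin n → ℚ) (x y : Fin n → ℤ) : ℚ :=
  ∑ i, ∑ j, d i * (A i j : ℚ) * (x i : ℚ) * (y j : ℚ)

/-! Along a connected diagram whose bonds have products `1` or `3`, neighbouring entries of the
symmetrizer differ by a factor `1` or `3`; as `p` is the unique shortest index, `dᵢ = rᵢ d_p` with
`r_p = 1` and `3 ∣ rᵢ` for `i ≠ p`. Since `x ↦ d_p ⟨x∨, ·⟩` and `(x, ·)` agree on `α_p` and both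
transform alike under the simple reflections, `(β, ·) = d_p ⟨β∨, ·⟩` on `W·α_p`. Hence
`(β₁, β₁) = (β₂, β₂) = 2 d_p`, `(β₁, β₂) = -d_p`, and `γ = β₂ - β₁` has `(γ, γ) = 6 d_p`. Modulo
`3`, `(γ, γ) / d_p = ∑ rᵢ aᵢⱼ γᵢ γⱼ ≡ 2 γ_p²`, so `3 ∣ γ_p`. Then every
`γⱼ (αⱼ, αⱼ) / (γ, γ) = γⱼ rⱼ / 3` is an integer and `(★)` makes `γ` a real root. -/

def IsRealRoot {n : ℕ} (A : Matrix (Fin n) (Fin n) ℤ) (γ : Fin n → ℤ) : Prop :=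
  ∃ (w : List (Fin n)) (q : Fin n), γ = actRoot A w (Pi.single q 1)

def IsIndecomposable {n : ℕ} (A : Matrix (Fin n) (Fin n) ℤ) : Prop :=
  ¬ ∃ I : Set (Fin n), I.Nonempty ∧ Iᶜ.Nonempty ∧ ∀ i ∈ I, ∀ j ∈ Iᶜ, A i j = 0

lemma Int.eq_neg_one_or_neg_three_of_mul {a b : ℤ} (ha : a ≤ -1) (hb : b ≤ -1)
    (h : a * b = 1 ∨ a * b = 3) : (a = -1 ∧ b = -1) ∨ (a = -1 ∧ b = -3) ∨ (a = -3 ∧ b = -1) := by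
  have hab : a * b ≤ 3 := by omega
  have ha' : -3 ≤ a := by nlinarith
  have hb' : -3 ≤ b := by nlinarith
  interval_cases a <;> interval_cases b <;> omega

lemma ZMod.intCast_quadratic_eq_of_dvd {ι : Type*} [Fintype ι] (m : ℕ) (B : Matrix ι ι ℤ)
    (p : ι) (hB : ∀ i j, (i, j) ≠ (p, p) → (m : ℤ) ∣ B i j) (x : ι → ℤ) :
    ((∑ i, ∑ j, B i j * x i * x j : ℤ) : ZMod m) = B p p * x p ^ 2 := by
  have hB0 : ∀ i j, (i, j) ≠ (p, p) → (B i j : ZMod m) = 0 := fun i j hij =>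
    (ZMod.intCast_zmod_eq_zero_iff_dvd _ _).mpr (hB i j hij)
  push_cast
  rw [Finset.sum_eq_single p, Finset.sum_eq_single p]
  · ring
  · intro j _ hj; simp [hB0 p j (by simp [hj])]
  · simp
  · intro i _ hi
    exact Finset.sum_eq_zero fun j _ => by simp [hB0 i j (by simp [hi])]
  · simp

section CartanMatrix

variable {n : ℕ} {A : Matrix (Fin n) (Fin n) ℤ} {d : Fin n → ℚ}

lemma pairing_single_left (k : Fin n) (x : Fin n → ℤ) :
    pairing A (Pi.single k 1) x = ∑ j, A k j * x j := by
  simp [pairing, Pi.single_apply]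

lemma pairing_single_right (y : Fin n → ℤ) (k : Fin n) :
    pairing A y (Pi.single k 1) = ∑ i, y i * A i k := by
  simp [pairing, Pi.single_apply]

lemma pairing_single_single (i j : Fin n) :
    pairing A (Pi.single i 1) (Pi.single j 1) = A i j := by
  simp [pairing, Pi.single_apply]

lemma pairing_sCoroot_left (k : Fin n) (y x : Fin n → ℤ) :
    pairing A (sCoroot A k y) x = pairing A y x - (∑ i, y i * A i k) * ∑ j, A k j * x j := by
  simp [pairing, sCoroot, sub_mul, Finset.sum_sub_distrib, ite_mul, Finset.mul_sum, mul_assoc]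

lemma pairing_sRoot_right (k : Fin n) (y x : Fin n → ℤ) :
    pairing A y (sRoot A k x) = pairing A y x - (∑ i, y i * A i k) * ∑ j, A k j * x j := by
  simp [pairing, sRoot, mul_sub, Finset.sum_sub_distrib, mul_ite, Finset.sum_mul]

lemma pairing_sCoroot_sRoot (hdiag : ∀ i, A i i = 2) (k : Fin n) (y x : Fin n → ℤ) :
    pairing A (sCoroot A k y) (sRoot A k x) = pairing A y x := by
  rw [pairing_sCoroot_left, pairing_sRoot_right]
  simp [sRoot, mul_sub, Finset.sum_sub_distrib, mul_ite, hdiag k]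
  ring

lemma pairing_actCoroot_actRoot (hdiag : ∀ i, A i i = 2) (w : List (Fin n))
    (y x : Fin n → ℤ) : pairing A (actCoroot A w y) (actRoot A w x) = pairing A y x := by
  induction w with
  | nil => rfl
  | cons k w ih => exact (pairing_sCoroot_sRoot hdiag k _ _).trans ih

lemma formQ_comm (hsym : ∀ i j, d i * A i j = d j * A j i) (x y : Fin n → ℤ) :
    formQ A d x y = formQ A d y x := by
  rw [formQ, Finset.sum_comm]
  refine Finset.sum_congr rfl fun i _ => Finset.sum_congr rfl fun j _ => ?_
  rw [hsym]; ring

lemma formQ_single_left (k : Fin n) (x : Fin n → ℤ) :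
    formQ A d (Pi.single k 1) x = d k * pairing A (Pi.single k 1) x := by
  simp [formQ, pairing, Pi.single_apply, Finset.mul_sum, mul_assoc]

lemma formQ_sRoot_left (k : Fin n) (x y : Fin n → ℤ) :
    formQ A d (sRoot A k x) y
      = formQ A d x y - (∑ j, A k j * x j) * formQ A d (Pi.single k 1) y := by
  simp [formQ, sRoot, Pi.single_apply, mul_sub, sub_mul, Finset.sum_sub_distrib, mul_ite,
    ite_mul, Finset.mul_sum]
  simp only [Finset.sum_mul]
  exact Finset.sum_congr rfl fun _ _ => Finset.sum_congr rfl fun _ _ => by ring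

lemma formQ_sub_left (x y z : Fin n → ℤ) :
    formQ A d (x - y) z = formQ A d x z - formQ A d y z := by
  simp [formQ, mul_sub, sub_mul, Finset.sum_sub_distrib]

lemma formQ_sub_right (x y z : Fin n → ℤ) :
    formQ A d z (x - y) = formQ A d z x - formQ A d z y := by
  simp [formQ, mul_sub, Finset.sum_sub_distrib]

lemma formQ_self_eq_mul_sum {p : Fin n} {r : Fin n → ℤ} (hr : ∀ i, d i = r i * d p)
    (x : Fin n → ℤ) : formQ A d x x = d p * ((∑ i, ∑ j, r i * A i j * x i * x j : ℤ) : ℚ) := by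
  push_cast
  simp only [formQ, Finset.mul_sum]
  exact Finset.sum_congr rfl fun i _ => Finset.sum_congr rfl fun _ _ => by rw [hr i]; ring

lemma IsIndecomposable.eq_univ (hind : IsIndecomposable A) {I : Set (Fin n)} (hI : I.Nonempty)
    (hclosed : ∀ i ∈ I, ∀ j, A i j ≠ 0 → j ∈ I) : I = Set.univ := by
  by_contra hne
  exact hind ⟨I, hI, Set.nonempty_compl.mpr hne, fun i hi j hj => by
    by_contra h; exact hj (hclosed i hi j h)⟩

section WeylOrbit

variable (hsym : ∀ i j, d i * A i j = d j * A j i)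
include hsym

lemma formQ_actRoot_eq_mul_pairing_actCoroot {c : ℚ} {x y : Fin n → ℤ}
    (h : ∀ z, formQ A d x z = c * pairing A y z) (w : List (Fin n)) (z : Fin n → ℤ) :
    formQ A d (actRoot A w x) z = c * pairing A (actCoroot A w y) z := by
  induction w generalizing z with
  | nil => exact h z
  | cons k w ih =>
    have hk : ((∑ j, A k j * actRoot A w x j : ℤ) : ℚ) * d k
        = c * ((∑ i, actCoroot A w y i * A i k : ℤ) : ℚ) := by
      rw [← pairing_single_right, ← ih, formQ_comm hsym, formQ_single_left, pairing_single_left]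
      ring
    change formQ A d (sRoot A k (actRoot A w x)) z
      = c * pairing A (sCoroot A k (actCoroot A w y)) z
    rw [formQ_sRoot_left, pairing_sCoroot_left, ih, formQ_single_left, pairing_single_left]
    push_cast at hk ⊢
    linear_combination -(∑ j, (A k j : ℚ) * z j) * hk

lemma formQ_actRoot_single (p : Fin n) (w : List (Fin n)) (z : Fin n → ℤ) :
    formQ A d (actRoot A w (Pi.single p 1)) z
      = d p * pairing A (actCoroot A w (Pi.single p 1)) z :=
  formQ_actRoot_eq_mul_pairing_actCoroot hsym (formQ_single_left p) w z

variable (hdiag : ∀ i, A i i = 2)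
include hdiag

lemma formQ_actRoot_single_self (p : Fin n) (w : List (Fin n)) :
    formQ A d (actRoot A w (Pi.single p 1)) (actRoot A w (Pi.single p 1)) = 2 * d p := by
  rw [formQ_actRoot_single hsym, pairing_actCoroot_actRoot hdiag, pairing_single_single, hdiag p]
  push_cast; ring

lemma formQ_sub_self_eq_six_mul {p : Fin n} {w₁ w₂ : List (Fin n)}
    (h₁ : pairing A (actCoroot A w₁ (Pi.single p 1)) (actRoot A w₂ (Pi.single p 1)) = -1)
    (h₂ : pairing A (actCoroot A w₂ (Pi.single p 1)) (actRoot A w₁ (Pi.single p 1)) = -1) :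
    formQ A d (actRoot A w₂ (Pi.single p 1) - actRoot A w₁ (Pi.single p 1))
      (actRoot A w₂ (Pi.single p 1) - actRoot A w₁ (Pi.single p 1)) = 6 * d p := by
  rw [formQ_sub_left, formQ_sub_right, formQ_sub_right,
    formQ_actRoot_single_self hsym hdiag, formQ_actRoot_single_self hsym hdiag,
    formQ_actRoot_single hsym p w₁, formQ_actRoot_single hsym p w₂, h₁, h₂]
  push_cast; ring

end WeylOrbit

section Symmetrizer

variable (hA : IsGCM A) (hd : IsSymmetrizer A d)
  (hlaced : ∀ i j, i ≠ j → A i j * A j i = 0 ∨ A i j * A j i = 1 ∨ A i j * A j i = 3)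
include hA hd hlaced

lemma IsSymmetrizer.eq_or_eq_three_mul {i j : Fin n} (hij : i ≠ j) (hAij : A i j ≠ 0) :
    d j = d i ∨ d j = 3 * d i ∨ d i = 3 * d j := by
  have hAji : A j i ≠ 0 := fun h => hAij (hA.2.2 j i h)
  have hsym : d i * A i j = d j * A j i := hd.2 i j
  have hprod : A i j * A j i = 1 ∨ A i j * A j i = 3 :=
    (hlaced i j hij).resolve_left (mul_ne_zero hAij hAji)
  rcases Int.eq_neg_one_or_neg_three_of_mul (by have := hA.2.1 i j hij; omega)
      (by have := hA.2.1 j i hij.symm; omega) hprod with ⟨h₁, h₂⟩ | ⟨h₁, h₂⟩ | ⟨h₁, h₂⟩ <;>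
    rw [h₁, h₂] at hsym <;> push_cast at hsym
  · left; linarith
  · right; right; linarith
  · right; left; linarith

lemma exists_zpow_three_mul (hind : IsIndecomposable A) (p i : Fin n) :
    ∃ m : ℤ, d i = 3 ^ m * d p := by
  suffices h : {i | ∃ m : ℤ, d i = 3 ^ m * d p} = Set.univ from Set.eq_univ_iff_forall.mp h i
  refine hind.eq_univ ⟨p, 0, by simp⟩ fun i ⟨m, hm⟩ j hAij => ?_
  rcases eq_or_ne i j with rfl | hij
  · exact ⟨m, hm⟩
  rcases hd.eq_or_eq_three_mul hA hlaced hij hAij with h | h | h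
  · exact ⟨m, by rw [h, hm]⟩
  · exact ⟨m + 1, by rw [h, hm, zpow_add_one₀ three_ne_zero]; ring⟩
  · exact ⟨m - 1, by rw [zpow_sub_one₀ three_ne_zero]; linear_combination (hm - h) / 3⟩

lemma exists_ratio_three_dvd (hind : IsIndecomposable A) {p : Fin n}
    (hsh : ∀ i, (∀ k, d i ≤ d k) ↔ i = p) :
    ∃ r : Fin n → ℤ, (∀ i, d i = r i * d p) ∧ r p = 1 ∧ ∀ i ≠ p, (3 : ℤ) ∣ r i := by
  have hdp := hd.1 p
  have hmin := (hsh p).mpr rfl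
  have hpow : ∀ i ≠ p, ∃ k : ℕ, d i = 3 ^ (k + 1) * d p := by
    intro i hi
    obtain ⟨m, hm⟩ := exists_zpow_three_mul hA hd hlaced hind p i
    have hm0 : 0 ≤ m := by
      have : 1 * d p ≤ 3 ^ m * d p := by linarith [hmin i]
      exact (one_le_zpow_iff_right₀ (by norm_num : (1 : ℚ) < 3)).mp
        (le_of_mul_le_mul_right this hdp)
    lift m to ℕ using hm0
    obtain _ | k := m
    · exact absurd ((hsh i).mp fun k => by simpa [hm] using hmin k) hi
    · exact ⟨k, by exact_mod_cast hm⟩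
  choose! k hk using hpow
  refine ⟨fun i => if i = p then 1 else 3 ^ (k i + 1), fun i => ?_, by simp, fun i hi => ?_⟩
  · by_cases hi : i = p
    · simp [hi]
    · simp [hi, hk i hi]
  · simp [hi, pow_succ]

end Symmetrizer

section ShortRoots

variable (hdiag : ∀ i, A i i = 2) (hsym : ∀ i j, d i * A i j = d j * A j i)
  {p : Fin n} {r : Fin n → ℤ} (hr : ∀ i, d i = r i * d p)
include hdiag hsym hr

lemma three_dvd_of_formQ_eq_six_mul (hdp : d p ≠ 0) (hrp : r p = 1)
    (hr3 : ∀ i ≠ p, (3 : ℤ) ∣ r i) {γ : Fin n → ℤ} (hγ : formQ A d γ γ = 6 * d p) :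
    (3 : ℤ) ∣ γ p := by
  have hsum : ∑ i, ∑ j, r i * A i j * γ i * γ j = 6 := by
    rw [formQ_self_eq_mul_sum hr, mul_comm] at hγ
    exact_mod_cast mul_right_cancel₀ hdp hγ
  have hrsym : ∀ i j, r i * A i j = r j * A j i := fun i j => by
    have := hsym i j
    rw [hr i, hr j] at this
    have h : d p * ((r i * A i j : ℤ) : ℚ) = d p * ((r j * A j i : ℤ) : ℚ) := by
      push_cast; linear_combination this
    exact_mod_cast mul_left_cancel₀ hdp h
  have hB : ∀ i j, (i, j) ≠ (p, p) → (3 : ℤ) ∣ r i * A i j := fun i j hij => by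
    by_cases hi : i = p
    · rw [hrsym]
      exact (hr3 j fun hj => hij (by rw [hi, hj])).mul_right _
    · exact (hr3 i hi).mul_right _
  have hmod := ZMod.intCast_quadratic_eq_of_dvd 3 (fun i j => r i * A i j) p hB γ
  simp only [hsum, hrp, hdiag p] at hmod
  refine (ZMod.intCast_zmod_eq_zero_iff_dvd (γ p) 3).mp ?_
  revert hmod
  generalize (γ p : ZMod 3) = g
  decide +revert

lemma isRealRoot_of_formQ_eq_six_mul
    (hstar : ∀ γ : Fin n → ℤ, γ ≠ 0 → 0 < formQ A d γ γ →
      (∀ j, ∃ c : ℤ, (γ j : ℚ) * formQ A d (Pi.single j 1) (Pi.single j 1)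
          = (c : ℚ) * formQ A d γ γ) → IsRealRoot A γ)
    (hdp : 0 < d p) (hrp : r p = 1) (hr3 : ∀ i ≠ p, (3 : ℤ) ∣ r i) {γ : Fin n → ℤ}
    (hγ : formQ A d γ γ = 6 * d p) : IsRealRoot A γ := by
  have hγp := three_dvd_of_formQ_eq_six_mul hdiag hsym hr hdp.ne' hrp hr3 hγ
  refine hstar γ ?_ (by rw [hγ]; positivity) fun j => ?_
  · rintro rfl
    simp [formQ] at hγ
    linarith
  · obtain ⟨c, hc⟩ : (3 : ℤ) ∣ γ j * r j := by
      by_cases hj : j = p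
      · exact hj ▸ hγp.mul_right _
      · exact (hr3 j hj).mul_left _
    refine ⟨c, ?_⟩
    have hc' : (γ j : ℚ) * r j = 3 * c := by exact_mod_cast hc
    rw [formQ_single_left, pairing_single_single, hdiag j, hγ, hr j]
    push_cast
    linear_combination (2 * d p) * hc'

end ShortRoots

end CartanMatrix

theorem A2_short_diff_is_root_triply_general {n : ℕ} (A : Matrix (Fin n) (Fin n) ℤ) (hA : IsGCM A)
    (d : Fin n → ℚ) (hd : IsSymmetrizer A d)
    (hind : ¬ ∃ I : Set (Fin n), I.Nonempty ∧ Iᶜ.Nonempty ∧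
      ∀ i ∈ I, ∀ j ∈ Iᶜ, A i j = 0)
    (hlaced : ∀ i j, i ≠ j → A i j * A j i = 0 ∨ A i j * A j i = 1 ∨ A i j * A j i = 3)
    (hstar : ∀ γ : Fin n → ℤ, γ ≠ 0 → 0 < formQ A d γ γ →
      (∀ j, ∃ c : ℤ, (γ j : ℚ) * formQ A d (Pi.single j 1) (Pi.single j 1)
          = (c : ℚ) * formQ A d γ γ) →
      ∃ (w : List (Fin n)) (q : Fin n), γ = actRoot A w (Pi.single q 1))
    (p : Fin n) (hsh : ∀ i, (∀ k, d i ≤ d k) ↔ i = p) :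
    (∀ w₁ w₂ : List (Fin n),
      pairing A (actCoroot A w₁ (Pi.single p 1)) (actRoot A w₂ (Pi.single p 1)) = -1 →
      pairing A (actCoroot A w₂ (Pi.single p 1)) (actRoot A w₁ (Pi.single p 1)) = -1 →
      ∃ (w : List (Fin n)) (q : Fin n),
        actRoot A w₂ (Pi.single p 1) - actRoot A w₁ (Pi.single p 1)
          = actRoot A w (Pi.single q 1))
    ∧
    ¬ ∃ w₁ w₂ : List (Fin n),
      pairing A (actCoroot A w₁ (Pi.single p 1)) (actRoot A w₂ (Pi.single p 1)) = -1 ∧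
      pairing A (actCoroot A w₂ (Pi.single p 1)) (actRoot A w₁ (Pi.single p 1)) = -1 ∧
      ¬ ∃ (w : List (Fin n)) (q : Fin n),
        actRoot A w₂ (Pi.single p 1) - actRoot A w₁ (Pi.single p 1)
          = actRoot A w (Pi.single q 1) := by
  obtain ⟨r, hr, hrp, hr3⟩ := exists_ratio_three_dvd hA hd hlaced hind hsh
  have hdiff : ∀ w₁ w₂ : List (Fin n),
      pairing A (actCoroot A w₁ (Pi.single p 1)) (actRoot A w₂ (Pi.single p 1)) = -1 →
      pairing A (actCoroot A w₂ (Pi.single p 1)) (actRoot A w₁ (Pi.single p 1)) = -1 →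
      IsRealRoot A (actRoot A w₂ (Pi.single p 1) - actRoot A w₁ (Pi.single p 1)) :=
    fun w₁ w₂ h₁ h₂ => isRealRoot_of_formQ_eq_six_mul hA.1 hd.2 hr hstar (hd.1 p) hrp hr3
      (formQ_sub_self_eq_six_mul hd.2 hA.1 h₁ h₂)
  exact ⟨hdiff, fun ⟨w₁, w₂, h₁, h₂, hne⟩ => hne (hdiff w₁ w₂ h₁ h₂)⟩

/-- Let `A` be an indecomposable, triply-laced symmetrizable GCM satisfying
condition (★) (every nonzero `γ ∈ Q` with `(γ,γ) > 0` and `kⱼ(αⱼ,αⱼ)/(γ,γ) ∈ ℤ` for all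
`j` is a real root), with `X_sh = {p}` a single index. If `β₁, β₂ ∈ W·α_p` pair as
`⟨β₁∨,β₂⟩ = ⟨β₂∨,β₁⟩ = −1` (type `A₂`), then `β₂ − β₁` is a real root; consequently there
is no π-system of type `A₂` contained wholly in the shortest real roots. -/
theorem A2_short_diff_is_root_triply {n : ℕ} (A : Matrix (Fin n) (Fin n) ℤ) (hA : IsGCM A)
    (d : Fin n → ℚ) (hd : IsSymmetrizer A d)
    (hind : ¬ ∃ I : Set (Fin n), I.Nonempty ∧ Iᶜ.Nonempty ∧
      ∀ i ∈ I, ∀ j ∈ Iᶜ, A i j = 0)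
    (hlaced : ∀ i j, i ≠ j → A i j * A j i = 0 ∨ A i j * A j i = 1 ∨ A i j * A j i = 3)
    (hattained : ∃ i j, i ≠ j ∧ A i j * A j i = 3)
    (hstar : ∀ γ : Fin n → ℤ, γ ≠ 0 → 0 < formQ A d γ γ →
      (∀ j, ∃ c : ℤ, (γ j : ℚ) * formQ A d (Pi.single j 1) (Pi.single j 1)
          = (c : ℚ) * formQ A d γ γ) →
      ∃ (w : List (Fin n)) (q : Fin n), γ = actRoot A w (Pi.single q 1))
    (p : Fin n) (hsh : ∀ i, (∀ k, d i ≤ d k) ↔ i = p) :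
    (∀ w₁ w₂ : List (Fin n),
      pairing A (actCoroot A w₁ (Pi.single p 1)) (actRoot A w₂ (Pi.single p 1)) = -1 →
      pairing A (actCoroot A w₂ (Pi.single p 1)) (actRoot A w₁ (Pi.single p 1)) = -1 →
      ∃ (w : List (Fin n)) (q : Fin n),
        actRoot A w₂ (Pi.single p 1) - actRoot A w₁ (Pi.single p 1)
          = actRoot A w (Pi.single q 1))
    ∧
    ¬ ∃ w₁ w₂ : List (Fin n),
      pairing A (actCoroot A w₁ (Pi.single p 1)) (actRoot A w₂ (Pi.single p 1)) = -1 ∧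
      pairing A (actCoroot A w₂ (Pi.single p 1)) (actRoot A w₁ (Pi.single p 1)) = -1 ∧
      ¬ ∃ (w : List (Fin n)) (q : Fin n),
        actRoot A w₂ (Pi.single p 1) - actRoot A w₁ (Pi.single p 1)
          = actRoot A w (Pi.single q 1) :=
  A2_short_diff_is_root_triply_general A hA d hd hind hlaced hstar p hsh
end
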